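/- arXiv:1510.01607 — 3 statements merged into one kernel-verified Lean document; each statement's English description precedes it below -/
import Mathlib

section
/- For a Garside shadow B in (W,S), any w ∈ W and s ∈ S, one has s·π_B(w) ≤_R s·w. -/
open CoxeterSystem

variable {A W : Type*} [Group W] {M : CoxeterMatrix A}

/-- Right weak order: `u ≤_R v` iff `ℓ(u) + ℓ(u⁻¹v) = ℓ(v)`. -/
def wle (cs : CoxeterSystem M W) (u v : W) : Prop :=
  cs.length u + cs.length (u⁻¹ * v) = cs.length v

/-- A subset of `W` is bounded in the right weak order. -/
def Bounded (cs : CoxeterSystem M W) (X : Set W) : Prop :=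
  ∃ g, ∀ x ∈ X, wle cs x g

/-- `m` is the join (least upper bound) of `X` in the right weak order. -/
def IsJoin (cs : CoxeterSystem M W) (X : Set W) (m : W) : Prop :=
  (∀ x ∈ X, wle cs x m) ∧ ∀ u, (∀ x ∈ X, wle cs x u) → wle cs m u

/-- `v` is a suffix of `w`: `ℓ(w v⁻¹) + ℓ(v) = ℓ(w)`. -/
def IsSuffix (cs : CoxeterSystem M W) (v w : W) : Prop :=
  cs.length (w * v⁻¹) + cs.length v = cs.length w

/-- A Garside shadow: contains the simple reflections, is closed under joins of
bounded subsets, and is closed under taking suffixes. -/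
def IsGarsideShadow (cs : CoxeterSystem M W) (Bs : Set W) : Prop :=
  (∀ i, cs.simple i ∈ Bs) ∧
  (∀ X ⊆ Bs, Bounded cs X → ∀ m, IsJoin cs X m → m ∈ Bs) ∧
  (∀ w ∈ Bs, ∀ v, IsSuffix cs v w → v ∈ Bs)

/-- `π` is the `B`-projection: `π w = ⋁ {g ∈ B | g ≤_R w}`. -/
def IsProj (cs : CoxeterSystem M W) (Bs : Set W) (π : W → W) : Prop :=
  ∀ w, π w ∈ Bs ∧ IsJoin cs {g | g ∈ Bs ∧ wle cs g w} (π w)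

/-!
The argument is a descent-set comparison. Since `π_B(w) ≤_R w`, left multiplication by `s`
preserves this relation as soon as `s` is a left descent of `π_B(w)` whenever it is one of `w`.
And if `s ≤_R w`, then `s ∈ B` lies below the join `π_B(w)`.
-/

section WeakOrder

variable (cs : CoxeterSystem M W)

theorem wle_trans {u v x : W} (huv : wle cs u v) (hvx : wle cs v x) : wle cs u x := by
  unfold wle at *
  have h₁ := cs.length_mul_le (u⁻¹ * v) (v⁻¹ * x)
  have h₂ := cs.length_mul_le u (u⁻¹ * x)
  simp only [mul_assoc, mul_inv_cancel_left] at h₁ h₂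
  omega

theorem wle_simple_iff {w : W} {i : A} : wle cs (cs.simple i) w ↔ cs.IsLeftDescent w i := by
  rw [wle, cs.isLeftDescent_iff, cs.inv_simple, cs.length_simple]
  have := cs.length_simple_mul w i
  omega

theorem wle_simple_mul_simple_mul {u v : W} {i : A} (huv : wle cs u v)
    (hdesc : cs.IsLeftDescent v i → cs.IsLeftDescent u i) :
    wle cs (cs.simple i * u) (cs.simple i * v) := by
  have hquot : (cs.simple i * u)⁻¹ * (cs.simple i * v) = u⁻¹ * v := by
    simp [mul_inv_rev, cs.inv_simple, mul_assoc, cs.simple_mul_simple_cancel_left]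
  have hu : ¬cs.IsLeftDescent v i → ¬cs.IsLeftDescent u i := fun hv hu =>
    hv ((wle_simple_iff cs).mp (wle_trans cs ((wle_simple_iff cs).mpr hu) huv))
  unfold wle at huv ⊢
  rw [hquot]
  by_cases hv : cs.IsLeftDescent v i
  · rw [cs.isLeftDescent_iff] at hv
    have := cs.isLeftDescent_iff.mp (hdesc (cs.isLeftDescent_iff.mpr hv))
    omega
  · have := cs.not_isLeftDescent_iff.mp (hu hv)
    rw [cs.not_isLeftDescent_iff] at hv
    omega

end WeakOrder

namespace IsProj

variable {cs : CoxeterSystem M W} {Bs : Set W} {π : W → W}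

theorem wle_self (hπ : IsProj cs Bs π) (w : W) : wle cs (π w) w :=
  (hπ w).2.2 w fun _ hg => hg.2

theorem wle_of_mem (hπ : IsProj cs Bs π) {g w : W} (hg : g ∈ Bs) (hgw : wle cs g w) :
    wle cs g (π w) :=
  (hπ w).2.1 g ⟨hg, hgw⟩

end IsProj

/-- For any `w ∈ W` and `s ∈ S`, one has `s·π_B(w) ≤_R s·w`. -/
theorem stmt_6 (cs : CoxeterSystem M W) (Bs : Set W) (hB : IsGarsideShadow cs Bs)
    (π : W → W) (hπ : IsProj cs Bs π) (w : W) (i : A) :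
    wle cs (cs.simple i * π w) (cs.simple i * w) :=
  wle_simple_mul_simple_mul cs (hπ.wle_self w) fun hw =>
    (wle_simple_iff cs).mp (hπ.wle_of_mem (hB.1 i) ((wle_simple_iff cs).mpr hw))
end

section
/- Let B be a Garside shadow in (W,S) and u, v ∈ W such that the product uv is reduced (ℓ(uv) = ℓ(u) + ℓ(v)). Then π_B(u·π_B(v)) = π_B(uv). -/
open CoxeterSystem

variable {A W : Type*} [Group W] {M : CoxeterMatrix A}

/-!
Induct on `ℓ(u)`, peeling off a left descent `u = s u'`, so that everything reduces to a
single factor `a ∈ B` with `av` reduced. There, `g := π_B(av)` lies above `a` (as `a ∈ B` and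
`a ≤_R av`), so `a⁻¹g` is a suffix of `g`, hence in `B`; it lies below `v`, hence below `π_B(v)`,
and multiplying back by `a` gives `g ≤_R a·π_B(v)`.
-/

section WeakOrder

variable (cs : CoxeterSystem M W)

lemma length_le_length_add_length_inv_mul (a b : W) :
    cs.length b ≤ cs.length a + cs.length (a⁻¹ * b) := by
  simpa using cs.length_mul_le a (a⁻¹ * b)

lemma length_inv_mul_le (a b c : W) :
    cs.length (a⁻¹ * c) ≤ cs.length (a⁻¹ * b) + cs.length (b⁻¹ * c) := by
  simpa [mul_assoc] using cs.length_mul_le (a⁻¹ * b) (b⁻¹ * c)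

variable {cs}

lemma wle_refl (w : W) : wle cs w w := by simp [wle]

lemma wle_trans_s8 {a b c : W} (hab : wle cs a b) (hbc : wle cs b c) : wle cs a c := by
  unfold wle at *
  have := length_inv_mul_le cs a b c
  have := length_le_length_add_length_inv_mul cs a c
  omega

lemma wle_antisymm {a b : W} (hab : wle cs a b) (hba : wle cs b a) : a = b := by
  unfold wle at *
  have := length_le_length_add_length_inv_mul cs b a
  have h : cs.length (a⁻¹ * b) = 0 := by omega
  exact inv_mul_eq_one.mp (cs.length_eq_zero_iff.mp h)

lemma length_mul_of_wle {a b u : W} (hab : wle cs a b)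
    (hub : cs.length (u * b) = cs.length u + cs.length b) :
    cs.length (u * a) = cs.length u + cs.length a := by
  unfold wle at hab
  have := cs.length_mul_le u a
  have := length_le_length_add_length_inv_mul cs (u * a) (u * b)
  rw [mul_inv_rev, mul_assoc, inv_mul_cancel_left] at this
  omega

lemma wle_mul_left {a b u : W} (hab : wle cs a b)
    (hub : cs.length (u * b) = cs.length u + cs.length b) :
    wle cs (u * a) (u * b) := by
  have hua := length_mul_of_wle hab hub
  unfold wle at *
  rw [mul_inv_rev, mul_assoc, inv_mul_cancel_left]
  omega

lemma wle_mul_of_length_mul {a b : W} (h : cs.length (a * b) = cs.length a + cs.length b) :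
    wle cs a (a * b) := by
  simp [wle, h]

lemma isSuffix_inv_mul_of_wle {a b : W} (hab : wle cs a b) : IsSuffix cs (a⁻¹ * b) b := by
  unfold IsSuffix wle at *
  rw [mul_inv_rev, inv_inv, mul_inv_cancel_left]
  exact hab

lemma wle_inv_mul_of_wle_mul {a b c : W} (hab : wle cs a b) (hbc : wle cs b (a * c))
    (hac : cs.length (a * c) = cs.length a + cs.length c) : wle cs (a⁻¹ * b) c := by
  unfold wle at *
  rw [mul_inv_rev, inv_inv, mul_assoc] at *
  omega

lemma length_mul_mul_split {a b c : W} (hab : cs.length (a * b) = cs.length a + cs.length b)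
    (habc : cs.length (a * b * c) = cs.length (a * b) + cs.length c) :
    cs.length (b * c) = cs.length b + cs.length c ∧
      cs.length (a * (b * c)) = cs.length a + cs.length (b * c) := by
  rw [mul_assoc] at habc
  have := cs.length_mul_le a (b * c)
  have := cs.length_mul_le b c
  omega

lemma exists_simple_mul_of_length_eq_succ {u : W} {n : ℕ} (hu : cs.length u = n + 1) :
    ∃ i u', u = cs.simple i * u' ∧ cs.length u' = n := by
  obtain ⟨i, hi⟩ := cs.exists_leftDescent_of_ne_one (w := u) (by rintro rfl; simp at hu)
  refine ⟨i, cs.simple i * u, by simp, ?_⟩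
  have := cs.isLeftDescent_iff.mp hi
  omega

end WeakOrder

section Projection

variable {cs : CoxeterSystem M W} {Bs : Set W} {π : W → W}

lemma proj_mem (hπ : IsProj cs Bs π) (w : W) : π w ∈ Bs := (hπ w).1

lemma proj_wle (hπ : IsProj cs Bs π) (w : W) : wle cs (π w) w :=
  (hπ w).2.2 w fun _ hx => hx.2

lemma wle_proj (hπ : IsProj cs Bs π) {g w : W} (hg : g ∈ Bs) (hgw : wle cs g w) :
    wle cs g (π w) :=
  (hπ w).2.1 g ⟨hg, hgw⟩

lemma proj_mono (hπ : IsProj cs Bs π) {a b : W} (hab : wle cs a b) : wle cs (π a) (π b) :=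
  wle_proj hπ (proj_mem hπ a) (wle_trans_s8 (proj_wle hπ a) hab)

lemma proj_proj (hπ : IsProj cs Bs π) (w : W) : π (π w) = π w :=
  wle_antisymm (proj_wle hπ (π w)) (wle_proj hπ (proj_mem hπ w) (wle_refl (π w)))

lemma proj_mul_proj_of_mem (hsuf : ∀ w ∈ Bs, ∀ v, IsSuffix cs v w → v ∈ Bs)
    (hπ : IsProj cs Bs π) {a v : W} (ha : a ∈ Bs)
    (hav : cs.length (a * v) = cs.length a + cs.length v) :
    π (a * π v) = π (a * v) := by
  have haπv := length_mul_of_wle (proj_wle hπ v) hav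
  set g := π (a * v)
  have hag : wle cs a g := wle_proj hπ ha (wle_mul_of_length_mul hav)
  have hsuf_g : a⁻¹ * g ∈ Bs := hsuf g (proj_mem hπ _) _ (isSuffix_inv_mul_of_wle hag)
  have hle_v : wle cs (a⁻¹ * g) v := wle_inv_mul_of_wle_mul hag (proj_wle hπ _) hav
  have hle_aπv : wle cs g (a * π v) := by
    simpa using wle_mul_left (wle_proj hπ hsuf_g hle_v) haπv
  exact wle_antisymm (proj_mono hπ (wle_mul_left (proj_wle hπ v) hav))
    (wle_proj hπ (proj_mem hπ _) hle_aπv)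

end Projection

/-- If `uv` is reduced, then `π_B(u·π_B(v)) = π_B(uv)`. -/
theorem stmt_8 (cs : CoxeterSystem M W) (Bs : Set W) (hB : IsGarsideShadow cs Bs)
    (π : W → W) (hπ : IsProj cs Bs π) (u v : W)
    (huv : cs.length (u * v) = cs.length u + cs.length v) :
    π (u * π v) = π (u * v) := by
  obtain ⟨hsimple, -, hsuf⟩ := hB
  induction hn : cs.length u generalizing u v with
  | zero => rw [cs.length_eq_zero_iff.mp hn, one_mul, one_mul, proj_proj hπ]
  | succ n ih =>
    obtain ⟨i, u, rfl, rfl⟩ := exists_simple_mul_of_length_eq_succ hn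
    have hsu : cs.length (cs.simple i * u) = cs.length (cs.simple i) + cs.length u := by
      rw [hn, cs.length_simple]; omega
    obtain ⟨huv', hsuv⟩ := length_mul_mul_split hsu huv
    obtain ⟨-, hsuπv⟩ := length_mul_mul_split hsu (length_mul_of_wle (proj_wle hπ v) huv)
    calc π (cs.simple i * u * π v) = π (cs.simple i * π (u * π v)) := by
          rw [mul_assoc, proj_mul_proj_of_mem hsuf hπ (hsimple i) hsuπv]
      _ = π (cs.simple i * π (u * v)) := by rw [ih u v huv' rfl]
      _ = π (cs.simple i * u * v) := by
          rw [proj_mul_proj_of_mem hsuf hπ (hsimple i) hsuv, mul_assoc]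
end

section
/- Let B be a Garside shadow in (W,S) and I ⊆ S. The restriction of π_B to W_I equals the (B ∩ W_I)-projection π_{B ∩ W_I} : W_I → B ∩ W_I. -/
open CoxeterSystem

variable {A W : Type*} [Group W] {M : CoxeterMatrix A}

/-- The standard parabolic subgroup `W_I`. -/
def parabolic (cs : CoxeterSystem M W) (I : Set A) : Subgroup W :=
  Subgroup.closure (cs.simple '' I)

/-- A Garside shadow in the Coxeter system `(W_I, I)` (whose length function and
weak order are the restrictions of those of `(W,S)`). -/
def IsGarsideShadowIn (cs : CoxeterSystem M W) (I : Set A) (Bs : Set W) : Prop :=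
  Bs ⊆ (parabolic cs I : Set W) ∧
  (∀ i ∈ I, cs.simple i ∈ Bs) ∧
  (∀ X ⊆ Bs, (∃ g ∈ parabolic cs I, ∀ x ∈ X, wle cs x g) →
    ∀ m, IsJoin cs X m → m ∈ Bs) ∧
  (∀ w ∈ Bs, ∀ v, IsSuffix cs v w → v ∈ Bs)

/-- `π'` is the `B'`-projection for the Coxeter system `(W_I, I)`. -/
def IsProjIn (cs : CoxeterSystem M W) (I : Set A) (Bs : Set W) (π' : W → W) : Prop :=
  ∀ w ∈ (parabolic cs I : Set W),
    π' w ∈ Bs ∧ IsJoin cs {g | g ∈ Bs ∧ wle cs g w} (π' w)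

/-- `p` is the map `w ↦ w_I` of the unique decomposition `w = w_I w^I`,
`w_I ∈ W_I`, `w^I ∈ X_I` (minimal coset representatives). -/
def IsParabolicProj (cs : CoxeterSystem M W) (I : Set A) (p : W → W) : Prop :=
  ∀ w, p w ∈ parabolic cs I ∧
    ∀ i ∈ I, cs.length ((p w)⁻¹ * w) < cs.length (cs.simple i * ((p w)⁻¹ * w))

/-!
Both projections are joins of sets of prefixes of `w`, so it suffices that every prefix `g ≤_R w`
of `w ∈ W_I` lies in `W_I`. Concatenating reduced words of `g` and `g⁻¹w` gives a reduced word of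
`w`, so the left inversion sequence of the word of `g`, whose product is `g⁻¹`, lies in that of a
reduced word of `w`. A reflection in the left inversion sequence of a reduced word occurs in that of
every word for the same element, in particular of a word in the letters `I`, all of whose left
inversions lie in `W_I`.

That last fact is detected by the reflection cocycle `W →* (W → ℤˣ) ⋊ W`, `s ↦ (δ_s, s)`, where
`δ_s` is `-1` at `s` and `1` elsewhere: the first component of the image of `w` at `t` is `(-1)` to
the number of occurrences of `t` in the left inversion sequence of any word for `w`.
-/

lemma mulAutArrow_toConjAct_apply {N : Type*} [Monoid N] (g : W) (F : W → N) (t : W) :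
    mulAutArrow (ConjAct.toConjAct g) F t = F (g⁻¹ * t * g) := by
  change F ((ConjAct.toConjAct g)⁻¹ • t) = _
  rw [ConjAct.smul_def, map_inv, ConjAct.ofConjAct_toConjAct, inv_inv]

lemma semiconjBy_inv_pow_of_mul_self {a b : W} (ha : a * a = 1) (hb : b * b = 1) (n : ℕ) :
    SemiconjBy a ((a * b) ^ n)⁻¹ ((a * b) ^ n) := by
  have hab : SemiconjBy a (a * b)⁻¹ (a * b) := by
    rw [SemiconjBy, mul_inv_rev, inv_eq_of_mul_eq_one_right ha, inv_eq_of_mul_eq_one_right hb,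
      mul_assoc]
  rw [← inv_pow]
  exact hab.pow_right n

section CocycleGroup

variable [DecidableEq W]

lemma mulAutArrow_toConjAct_mulSingle (g a : W) (x : ℤˣ) :
    mulAutArrow (ConjAct.toConjAct g) (Pi.mulSingle a x) = Pi.mulSingle (g * a * g⁻¹) x := by
  ext t
  simp only [mulAutArrow_toConjAct_apply, Pi.mulSingle_apply]
  congr 2
  apply propext
  constructor <;> rintro rfl <;> group

abbrev CocycleGroup (W : Type*) [Group W] := (W → ℤˣ) ⋊[mulAutArrow] ConjAct W

def cocycleGen (a : W) : CocycleGroup W := ⟨Pi.mulSingle a (-1), ConjAct.toConjAct a⟩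

lemma cocycleGen_mul (a b : W) :
    cocycleGen a * cocycleGen b =
      ⟨Pi.mulSingle a (-1) * Pi.mulSingle (a * b * a⁻¹) (-1), ConjAct.toConjAct (a * b)⟩ := by
  rw [cocycleGen, cocycleGen, SemidirectProduct.mul_def]
  dsimp only
  rw [mulAutArrow_toConjAct_mulSingle, map_mul]

lemma cocycleGen_mul_pow {a b : W} (ha : a * a = 1) (hb : b * b = 1) (n : ℕ) :
    (cocycleGen a * cocycleGen b) ^ n =
      ⟨∏ k ∈ Finset.range (2 * n), Pi.mulSingle ((a * b) ^ k * a) (-1),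
        ConjAct.toConjAct ((a * b) ^ n)⟩ := by
  induction n with
  | zero => rw [pow_zero, pow_zero, map_one, mul_zero, Finset.prod_range_zero]; rfl
  | succ n ih =>
    have key := (semiconjBy_inv_pow_of_mul_self ha hb n).eq
    rw [pow_succ, ih, cocycleGen_mul, SemidirectProduct.mul_def]
    dsimp only
    rw [map_mul, mulAutArrow_toConjAct_mulSingle, mulAutArrow_toConjAct_mulSingle, ← map_mul,
      ← pow_succ]
    set u := a * b
    have h₁ : u ^ n * a * (u ^ n)⁻¹ = u ^ (2 * n) * a := by
      rw [mul_assoc, key, ← mul_assoc, ← pow_add, two_mul]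
    have h₂ : u ^ n * (u * a⁻¹) * (u ^ n)⁻¹ = u ^ (2 * n + 1) * a := by
      rw [inv_eq_of_mul_eq_one_right ha, mul_assoc, mul_assoc, key, ← mul_assoc, ← mul_assoc,
        ← pow_succ, ← pow_add]
      congr 2
      omega
    rw [h₁, h₂, Nat.mul_succ, Finset.prod_range_succ, Finset.prod_range_succ, mul_assoc]

lemma cocycleGen_mul_pow_eq_one {a b : W} (ha : a * a = 1) (hb : b * b = 1) {m : ℕ}
    (hm : (a * b) ^ m = 1) : (cocycleGen a * cocycleGen b) ^ m = 1 := by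
  -- each reflection `(ab)ᵏ a` of the product occurs twice, for `k` and for `k + m`
  rw [cocycleGen_mul_pow ha hb, two_mul, Finset.prod_range_add]
  simp only [pow_add, hm, one_mul, map_one]
  refine SemidirectProduct.ext ?_ rfl
  funext t
  exact Int.units_mul_self _

end CocycleGroup

namespace CoxeterSystem

variable (cs : CoxeterSystem M W)

section ReflectionCocycle

variable [DecidableEq W]

lemma isLiftable_cocycleGen : M.IsLiftable fun i => cocycleGen (cs.simple i) := fun i i' =>
  cocycleGen_mul_pow_eq_one (cs.simple_mul_simple_self i) (cs.simple_mul_simple_self i')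
    (cs.simple_mul_simple_pow i i')

noncomputable def reflectionCocycle : W →* CocycleGroup W :=
  cs.lift ⟨_, cs.isLiftable_cocycleGen⟩

lemma reflectionCocycle_simple (i : A) :
    cs.reflectionCocycle (cs.simple i) = cocycleGen (cs.simple i) :=
  cs.lift_apply_simple cs.isLiftable_cocycleGen i

lemma reflectionCocycle_wordProd_left (ω : List A) (t : W) :
    (cs.reflectionCocycle (cs.wordProd ω)).left t = (-1) ^ (cs.leftInvSeq ω).count t := by
  induction ω generalizing t with
  | nil => simp
  | cons i ω ih =>
    have hlis : cs.leftInvSeq (i :: ω) =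
        cs.simple i :: (cs.leftInvSeq ω).map (MulAut.conj (cs.simple i)) := rfl
    have ht : t = MulAut.conj (cs.simple i) ((cs.simple i)⁻¹ * t * cs.simple i) := by
      simp [mul_assoc]
    rw [cs.wordProd_cons, map_mul, reflectionCocycle_simple, SemidirectProduct.mul_left,
      cocycleGen, Pi.mul_apply, mulAutArrow_toConjAct_apply, ih, hlis, List.count_cons,
      pow_add, ht, List.count_map_of_injective _ _ (MulAut.conj _).injective, ← ht, mul_comm]
    congr 1
    rcases eq_or_ne t (cs.simple i) with rfl | h
    · simp
    · simp [h, h.symm]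

end ReflectionCocycle

lemma mem_leftInvSeq_of_isReduced {ω ω' : List A} (hω' : cs.IsReduced ω')
    (h : cs.wordProd ω = cs.wordProd ω') {t : W} (ht : t ∈ cs.leftInvSeq ω') :
    t ∈ cs.leftInvSeq ω := by
  classical
  by_contra hn
  have := congrArg (fun w => (cs.reflectionCocycle w).left t) h
  simp only [reflectionCocycle_wordProd_left, List.count_eq_zero_of_not_mem hn,
    List.count_eq_one_of_mem hω'.nodup_leftInvSeq ht] at this
  exact absurd this (by decide)

variable {I : Set A}

lemma simple_mem_parabolic {i : A} (hi : i ∈ I) : cs.simple i ∈ parabolic cs I :=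
  Subgroup.subset_closure ⟨i, hi, rfl⟩

lemma exists_word_of_mem_parabolic {w : W} (hw : w ∈ parabolic cs I) :
    ∃ ψ : List A, (∀ a ∈ ψ, a ∈ I) ∧ cs.wordProd ψ = w := by
  induction hw using Subgroup.closure_induction with
  | mem x hx =>
    obtain ⟨i, hi, rfl⟩ := hx
    exact ⟨[i], by simpa using hi, cs.wordProd_singleton i⟩
  | one => exact ⟨[], by simp, cs.wordProd_nil⟩
  | mul x y _ _ ihx ihy =>
    obtain ⟨ψ₁, h₁, rfl⟩ := ihx
    obtain ⟨ψ₂, h₂, rfl⟩ := ihy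
    exact ⟨ψ₁ ++ ψ₂, by simpa [or_imp, forall_and] using ⟨h₁, h₂⟩, cs.wordProd_append ψ₁ ψ₂⟩
  | inv x _ ihx =>
    obtain ⟨ψ, h, rfl⟩ := ihx
    exact ⟨ψ.reverse, by simpa using h, cs.wordProd_reverse ψ⟩

lemma leftInvSeq_subset_parabolic {ψ : List A} (hψ : ∀ a ∈ ψ, a ∈ I) :
    ∀ t ∈ cs.leftInvSeq ψ, t ∈ parabolic cs I := by
  induction ψ with
  | nil => simp
  | cons i ψ ih =>
    have hi := cs.simple_mem_parabolic (hψ i List.mem_cons_self)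
    rintro t (_ | ⟨_, ht⟩)
    · exact hi
    · obtain ⟨x, hx, rfl⟩ := List.mem_map.mp ht
      exact mul_mem (mul_mem hi (ih (fun a ha => hψ a (List.mem_cons_of_mem _ ha)) x hx))
        (inv_mem hi)

lemma mem_parabolic_of_wle {g w : W} (hw : w ∈ parabolic cs I) (hgw : wle cs g w) :
    g ∈ parabolic cs I := by
  obtain ⟨ψ, hψI, rfl⟩ := cs.exists_word_of_mem_parabolic hw
  obtain ⟨ω, hω, rfl⟩ := cs.exists_isReduced g
  obtain ⟨ν, hν, hν'⟩ := cs.exists_isReduced ((cs.wordProd ω)⁻¹ * cs.wordProd ψ)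
  have hprod : cs.wordProd (ω ++ ν) = cs.wordProd ψ := by
    rw [cs.wordProd_append, ← hν', mul_inv_cancel_left]
  have hred : cs.IsReduced (ω ++ ν) := by
    unfold wle at hgw
    rw [IsReduced, hprod, ← hgw, hω.eq, hν', hν.eq, List.length_append]
  have hsub : ∀ t ∈ cs.leftInvSeq ω, t ∈ parabolic cs I := by
    intro t ht
    rw [← List.take_left (l₁ := ω) (l₂ := ν), cs.leftInvSeq_take] at ht
    exact cs.leftInvSeq_subset_parabolic hψI t
      (cs.mem_leftInvSeq_of_isReduced hred hprod.symm (List.mem_of_mem_take ht))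
  rw [← inv_mem_iff, ← cs.prod_leftInvSeq]
  exact list_prod_mem hsub

end CoxeterSystem

lemma wle_antisymm_s13 (cs : CoxeterSystem M W) {u v : W} (huv : wle cs u v) (hvu : wle cs v u) :
    u = v := by
  have hinv : cs.length (v⁻¹ * u) = cs.length (u⁻¹ * v) := by
    rw [← cs.length_inv, mul_inv_rev, inv_inv]
  unfold wle at huv hvu
  exact inv_mul_eq_one.mp (cs.length_eq_zero_iff.mp (by omega))

lemma IsJoin.unique {cs : CoxeterSystem M W} {X : Set W} {m m' : W} (h : IsJoin cs X m)
    (h' : IsJoin cs X m') : m = m' :=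
  wle_antisymm_s13 cs (h.2 m' h'.1) (h'.2 m h.1)

theorem stmt_13_general (cs : CoxeterSystem M W) (Bs : Set W)
    (I : Set A) (π π' : W → W) (hπ : IsProj cs Bs π)
    (hπ' : IsProjIn cs I (Bs ∩ (parabolic cs I : Set W)) π')
    (w : W) (hw : w ∈ parabolic cs I) :
    π w = π' w := by
  have hprefixes : {g | g ∈ Bs ∩ (parabolic cs I : Set W) ∧ wle cs g w} =
      {g | g ∈ Bs ∧ wle cs g w} := by
    ext g
    exact ⟨fun ⟨⟨hgB, _⟩, hgw⟩ => ⟨hgB, hgw⟩,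
      fun ⟨hgB, hgw⟩ => ⟨⟨hgB, cs.mem_parabolic_of_wle hw hgw⟩, hgw⟩⟩
  exact (hπ w).2.unique (hprefixes ▸ (hπ' w hw).2)

/-- The restriction of `π_B` to `W_I` is the `(B ∩ W_I)`-projection. -/
theorem stmt_13 (cs : CoxeterSystem M W) (Bs : Set W) (hB : IsGarsideShadow cs Bs)
    (I : Set A) (π π' : W → W) (hπ : IsProj cs Bs π)
    (hπ' : IsProjIn cs I (Bs ∩ (parabolic cs I : Set W)) π')
    (w : W) (hw : w ∈ parabolic cs I) :
    π w = π' w :=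
  stmt_13_general cs Bs I π π' hπ hπ' w hw
end
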